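/- Consider bond percolation with parameter p = n^{−α} on the n-dimensional hypercube, let 0 < β < α − 1/2, and let l = n^β (so l ≥ 1). For any vertex v and any vertex x at Hamming distance l from v, the probability that v is connected to x by an open path contained in the ball S of radius l around v is at most (lp)^l / (1 − n^{2β+1−2α}) = n^{(β−α)n^β} / (1 − n^{2β+1−2α}). -/

import Mathlib

open MeasureTheory ProbabilityTheory
open scoped ENNReal

/-- Bernoulli measure on `Bool` with parameter `p` (truncated to `[0,1]`). -/
noncomputable def bern (p : ℝ) : Measure Bool :=
  (PMF.bernoulli (min (Real.toNNReal p) 1) (min_le_right _ _)).toMeasure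

instance (p : ℝ) : IsProbabilityMeasure (bern p) := by
  unfold bern; infer_instance

/-- Independent percolation: product Bernoulli measure on configurations indexed by `E`. -/
noncomputable def perc (E : Type*) [Fintype E] (p : ℝ) : Measure (E → Bool) :=
  Measure.pi fun _ => bern p

variable {V : Type*}

/-- `x` and `y` are joined by an open path all of whose vertices lie in `S`. -/
def OpenConnOn (G : SimpleGraph V) (ω : Sym2 V → Bool) (S : Set V) (x y : V) : Prop :=
  ∃ w : G.Walk x y, (∀ e ∈ w.edges, ω e = true) ∧ ∀ z ∈ w.support, z ∈ S

/-- `x` and `y` are joined by an open path. -/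
def OpenConn (G : SimpleGraph V) (ω : Sym2 V → Bool) (x y : V) : Prop :=
  ∃ w : G.Walk x y, ∀ e ∈ w.edges, ω e = true

/-- A (deterministic, adaptive) routing algorithm: given the history of probed
edges together with their observed status, it chooses the next edge to probe. -/
structure Alg (V : Type*) where
  next : List (Sym2 V × Bool) → Sym2 V

/-- The history (list of probed edges with their status) after `t` probes. -/
def Alg.hist (A : Alg V) (ω : Sym2 V → Bool) : ℕ → List (Sym2 V × Bool)
  | 0 => []
  | t + 1 => (A.next (A.hist ω t), ω (A.next (A.hist ω t))) :: A.hist ω t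

/-- The set of edges probed and found open within the first `t` probes. -/
def Alg.probedOpen (A : Alg V) (ω : Sym2 V → Bool) (t : ℕ) : Set (Sym2 V) :=
  {e | (e, true) ∈ A.hist ω t}

/-- Vertices reachable from `u` using only edges in the set `F`. -/
def reachedFrom (G : SimpleGraph V) (u : V) (F : Set (Sym2 V)) : Set V :=
  {x | ∃ w : G.Walk u x, ∀ e ∈ w.edges, e ∈ F}

/-- A local routing algorithm only probes edges incident to a vertex already
reached from `u` by probed open edges. -/
def Alg.IsLocal (A : Alg V) (G : SimpleGraph V) (u : V) : Prop :=
  ∀ ω t, ∃ x, x ∈ reachedFrom G u (A.probedOpen ω t) ∧ x ∈ A.next (A.hist ω t)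

/-- The algorithm has succeeded within `t` probes: it has certified an open
path from `u` to `v` (all of whose edges were probed and found open). -/
def Alg.SucceedsBy (A : Alg V) (G : SimpleGraph V) (ω : Sym2 V → Bool) (u v : V) (t : ℕ) : Prop :=
  ∃ w : G.Walk u v, ∀ e ∈ w.edges, e ∈ A.probedOpen ω t

/-- The `n`-dimensional hypercube graph on `Fin n → Bool`: two vertices are
adjacent iff they differ in exactly one coordinate. -/
def cube (n : ℕ) : SimpleGraph (Fin n → Bool) where
  Adj x y := hammingDist x y = 1
  symm := ⟨fun x y (h : hammingDist x y = 1) => show hammingDist y x = 1 by rwa [hammingDist_comm]⟩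
  loopless := ⟨fun x (h : hammingDist x x = 1) => by rw [hammingDist_self] at h; exact Nat.zero_ne_one h⟩

instance (n : ℕ) : DecidableRel (cube n).Adj := fun x y => show Decidable (hammingDist x y = 1) from Nat.decEq _ _

/-!
Encode a walk in the cube by the list of coordinates it flips. An open path from `v` to `x`
inside the ball of radius `l` has length `l + 2k` for some `k` and is open with probability
`p ^ (l + 2k)`. There are at most `l ^ l * (n * l²) ^ k` such encodings: for `k = 0` they are
sequences of the `l` coordinates where `v` and `x` differ, and a walk of length `l + 2k + 2` in
the ball repeats a coordinate within its first `l + 1` steps (a walk flipping distinct coordinates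
moves away from `v`), so it arises from a walk of length `l + 2k` by inserting one coordinate
(`n` choices) at two positions before `l` (`l²` choices). The union bound then sums to a
geometric series of ratio `n * l² * p² = n ^ (2β + 1 - 2α) < 1`.
-/

namespace List

variable {α : Type*}

theorem exists_first_duplicate {s : List α} (h : ¬ s.Nodup) :
    ∃ p mid r c, s = p ++ c :: mid ++ c :: r ∧ (p ++ c :: mid).Nodup := by
  induction s using List.reverseRecOn with
  | nil => exact absurd List.nodup_nil h
  | append_singleton s a ih =>
    by_cases hs : s.Nodup
    · have ha : a ∈ s := by
        by_contra ha
        exact h (by simpa using hs.concat ha)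
      obtain ⟨p, mid, rfl⟩ := List.append_of_mem ha
      exact ⟨p, mid, [], a, rfl, hs⟩
    · obtain ⟨p, mid, r, c, rfl, hnd⟩ := ih hs
      exact ⟨p, mid, r ++ [a], c, by simp, hnd⟩

def insertPair (s : List α) (c : α) (j t : ℕ) : List α :=
  s.take j ++ c :: (s.drop j).take (t - j) ++ c :: s.drop t

theorem insertPair_append_append (p mid r : List α) (c : α) :
    (p ++ mid ++ r).insertPair c p.length (p.length + mid.length) = p ++ c :: mid ++ c :: r := by
  simp [insertPair, List.drop_append]

theorem encard_setOf_length_eq_forall_mem_le (D : Finset α) (L : ℕ) :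
    {s : List α | s.length = L ∧ ∀ a ∈ s, a ∈ D}.encard ≤ D.card ^ L := by
  have hsub : {s : List α | s.length = L ∧ ∀ a ∈ s, a ∈ D} ⊆
      (fun f : Fin L → D => List.ofFn fun i => (f i : α)) '' Set.univ := by
    rintro s ⟨rfl, hs⟩
    exact ⟨fun i => ⟨s[i], hs _ (List.getElem_mem _)⟩, trivial, List.ofFn_getElem⟩
  calc _ ≤ _ := Set.encard_le_encard hsub
    _ ≤ (Set.univ : Set (Fin L → D)).encard := Set.encard_image_le _ _
    _ = D.card ^ L := by simp

end List

theorem bern_singleton_true {p : ℝ} (hp : p ≤ 1) : bern p {true} = ENNReal.ofReal p := by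
  rw [bern, PMF.toMeasure_apply_singleton _ _ (measurableSet_singleton _)]
  exact congrArg _ (min_eq_left (Real.toNNReal_le_one.2 hp))

theorem perc_setOf_forall_mem_eq_true {E : Type*} [Fintype E] {p : ℝ} (hp : p ≤ 1)
    (F : Finset E) : perc E p {ω | ∀ e ∈ F, ω e = true} = ENNReal.ofReal p ^ F.card := by
  change Measure.pi _ ((F : Set E).pi fun _ => {true}) = _
  simp [bern_singleton_true hp]

theorem ENNReal.tsum_ofReal_mul_pow {a r : ℝ} (ha : 0 ≤ a) (hr₀ : 0 ≤ r) (hr₁ : r < 1) :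
    ∑' k : ℕ, ENNReal.ofReal a * ENNReal.ofReal r ^ k = ENNReal.ofReal (a / (1 - r)) := by
  rw [ENNReal.tsum_mul_left, ENNReal.tsum_geometric, ← ENNReal.ofReal_one,
    ← ENNReal.ofReal_sub _ hr₀, ← ENNReal.ofReal_inv_of_pos (by linarith),
    ← ENNReal.ofReal_mul ha, div_eq_mul_inv]

namespace Cube

variable {n : ℕ}

def flipAt (c : Fin n) (z : Fin n → Bool) : Fin n → Bool := Function.update z c (!z c)

/-- The end of the walk from `v` that flips the coordinates of `s` in turn. -/
def endpoint (v : Fin n → Bool) (s : List (Fin n)) : Fin n → Bool :=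
  fun a => if Even (s.count a) then v a else !v a

@[simp]
theorem endpoint_nil (v : Fin n → Bool) : endpoint v [] = v := by
  funext a; simp [endpoint]

theorem endpoint_congr (v : Fin n → Bool) {s₁ s₂ : List (Fin n)}
    (h : ∀ a, Even (s₁.count a) ↔ Even (s₂.count a)) : endpoint v s₁ = endpoint v s₂ := by
  funext a; simp [endpoint, h a]

theorem endpoint_apply_eq_iff (v : Fin n → Bool) (s : List (Fin n)) (a : Fin n) :
    endpoint v s a = v a ↔ Even (s.count a) := by
  unfold endpoint
  split_ifs with h <;> simp [h]

theorem endpoint_cons (v : Fin n → Bool) (c : Fin n) (s : List (Fin n)) :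
    endpoint v (c :: s) = endpoint (flipAt c v) s := by
  funext a
  rcases eq_or_ne a c with rfl | hac
  · by_cases h : Even (s.count a) <;> simp [endpoint, flipAt, Nat.even_add_one, h]
  · simp [endpoint, flipAt, hac, List.count_cons_of_ne (Ne.symm hac)]

theorem endpoint_append_cons_append_cons (v : Fin n → Bool) (p mid r : List (Fin n)) (c : Fin n) :
    endpoint v (p ++ c :: mid ++ c :: r) = endpoint v (p ++ mid ++ r) :=
  endpoint_congr v fun a => by
    by_cases hca : c = a
    · subst hca
      simp only [List.count_append, List.count_cons_self, Nat.even_add, Nat.even_add_one]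
      tauto
    · simp [List.count_append, hca]

theorem hammingDist_endpoint (v : Fin n → Bool) (s : List (Fin n)) :
    hammingDist v (endpoint v s) = (Finset.univ.filter fun a => ¬ Even (s.count a)).card := by
  unfold hammingDist
  congr 1
  ext a
  simp [eq_comm (a := v a), endpoint_apply_eq_iff]

theorem hammingDist_endpoint_of_nodup (v : Fin n → Bool) {s : List (Fin n)} (hs : s.Nodup) :
    hammingDist v (endpoint v s) = s.length := by
  rw [hammingDist_endpoint, ← List.toFinset_card_of_nodup hs]
  congr 1
  ext a
  by_cases ha : a ∈ s
  · simp [ha, List.count_eq_one_of_mem hs ha]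
  · simp [ha, List.count_eq_zero_of_not_mem ha]

theorem exists_length_eq_hammingDist_endpoint_add (v : Fin n → Bool) (s : List (Fin n)) :
    ∃ k, s.length = hammingDist v (endpoint v s) + 2 * k := by
  induction hl : s.length using Nat.strong_induction_on generalizing s with
  | _ L ih =>
    by_cases hs : s.Nodup
    · exact ⟨0, by rw [hammingDist_endpoint_of_nodup v hs, hl]; rfl⟩
    obtain ⟨p, mid, r, c, rfl, -⟩ := List.exists_first_duplicate hs
    have hshorter : (p ++ mid ++ r).length < L := by
      simp only [List.length_append, List.length_cons] at hl ⊢; omega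
    obtain ⟨k, hk⟩ := ih _ hshorter _ rfl
    refine ⟨k + 1, ?_⟩
    rw [endpoint_append_cons_append_cons]
    simp only [List.length_append, List.length_cons] at hl hk ⊢
    omega

theorem hammingDist_endpoint_le_length (v : Fin n → Bool) (s : List (Fin n)) :
    hammingDist v (endpoint v s) ≤ s.length := by
  obtain ⟨k, hk⟩ := exists_length_eq_hammingDist_endpoint_add v s
  omega

theorem nodup_of_hammingDist_endpoint_eq (v : Fin n → Bool) {s : List (Fin n)}
    (hs : hammingDist v (endpoint v s) = s.length) : s.Nodup := by
  by_contra hnd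
  obtain ⟨p, mid, r, c, rfl, -⟩ := List.exists_first_duplicate hnd
  have := hammingDist_endpoint_le_length v (p ++ mid ++ r)
  rw [endpoint_append_cons_append_cons] at hs
  simp only [List.length_append, List.length_cons] at hs this
  omega

def ballWalks (v x : Fin n → Bool) (l L : ℕ) : Set (List (Fin n)) :=
  {s | s.length = L ∧ (∀ t, hammingDist v (endpoint v (s.take t)) ≤ l) ∧ endpoint v s = x}

variable {v x : Fin n → Bool} {l L : ℕ}

theorem ballWalks_subset_image_insertPair (hL : l ≤ L) :
    ballWalks v x l (L + 2) ⊆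
      (fun y : List (Fin n) × Fin n × Fin l × Fin l => y.1.insertPair y.2.1 y.2.2.1 y.2.2.2) ''
        (ballWalks v x l L ×ˢ Set.univ) := by
  rintro s ⟨hlen, hball, rfl⟩
  -- `s` has a first repeated coordinate `c`; dropping both of its occurrences keeps the walk in
  -- the ball, since up to the second one `s` flips distinct coordinates and so has moved `< l`.
  have hnd : ¬ s.Nodup := fun hs => by
    have := hball s.length
    rw [List.take_length, hammingDist_endpoint_of_nodup v hs] at this
    omega
  obtain ⟨p, mid, r, c, rfl, hq⟩ := List.exists_first_duplicate hnd
  have hql : p.length + mid.length < l := by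
    have := hball (p ++ c :: mid).length
    rw [List.take_left, hammingDist_endpoint_of_nodup v hq] at this
    simp only [List.length_append, List.length_cons] at this; omega
  refine ⟨(p ++ mid ++ r, c, ⟨p.length, by omega⟩, ⟨p.length + mid.length, hql⟩),
    ⟨⟨?_, ?_, ?_⟩, trivial⟩, List.insertPair_append_append p mid r c⟩
  · simp only [List.length_append, List.length_cons] at hlen ⊢; omega
  · intro t
    rcases le_or_gt t (p ++ mid).length with ht | ht
    · calc hammingDist v (endpoint v ((p ++ mid ++ r).take t))
          ≤ ((p ++ mid ++ r).take t).length := hammingDist_endpoint_le_length v _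
        _ ≤ l := by simp only [List.length_take, List.length_append] at ht ⊢; omega
    · obtain ⟨i, rfl⟩ := Nat.exists_eq_add_of_lt ht
      have e₁ : (p ++ mid ++ r).take ((p ++ mid).length + i + 1) = p ++ mid ++ r.take (i + 1) :=
        List.take_length_add_append (i + 1)
      have e₂ : (p ++ c :: mid ++ c :: r).take ((p ++ c :: mid ++ [c]).length + (i + 1)) =
          p ++ c :: mid ++ c :: r.take (i + 1) := by
        simpa using List.take_length_add_append (l₁ := p ++ c :: mid ++ [c]) (l₂ := r) (i + 1)
      have := hball ((p ++ c :: mid ++ [c]).length + (i + 1))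
      rwa [e₂, endpoint_append_cons_append_cons, ← e₁] at this
  · exact (endpoint_append_cons_append_cons v p mid r c).symm

theorem encard_ballWalks_self_le (hd : hammingDist v x = l) :
    (ballWalks v x l l).encard ≤ l ^ l := by
  have hsub : ballWalks v x l l ⊆
      {s | s.length = l ∧ ∀ a ∈ s, a ∈ Finset.univ.filter fun a => v a ≠ x a} := by
    rintro s ⟨hlen, -, hx⟩
    have hs := nodup_of_hammingDist_endpoint_eq v (hx ▸ hd.trans hlen.symm)
    refine ⟨hlen, fun a ha => ?_⟩
    rw [Finset.mem_filter, ← hx, ne_eq, eq_comm, endpoint_apply_eq_iff,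
      List.count_eq_one_of_mem hs ha]
    simp
  calc _ ≤ _ := Set.encard_le_encard hsub
    _ ≤ _ := List.encard_setOf_length_eq_forall_mem_le _ l
    _ = l ^ l := by rw [← hd]; rfl

theorem encard_ballWalks_add_two_le (hL : l ≤ L) :
    (ballWalks v x l (L + 2)).encard ≤ (ballWalks v x l L).encard * (n * l * l : ℕ) :=
  calc _ ≤ _ := Set.encard_le_encard (ballWalks_subset_image_insertPair hL)
    _ ≤ _ := Set.encard_image_le _ _
    _ = _ := by simp [Set.encard_prod, mul_assoc]

theorem encard_ballWalks_le (hd : hammingDist v x = l) (k : ℕ) :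
    (ballWalks v x l (l + 2 * k)).encard ≤ (l ^ l * (n * l * l) ^ k : ℕ) := by
  induction k with
  | zero => simpa using encard_ballWalks_self_le hd
  | succ k ih =>
    calc _ ≤ (ballWalks v x l (l + 2 * k)).encard * (n * l * l : ℕ) :=
          encard_ballWalks_add_two_le (by omega)
      _ ≤ (l ^ l * (n * l * l) ^ k : ℕ) * (n * l * l : ℕ) := by gcongr
      _ = (l ^ l * (n * l * l) ^ (k + 1) : ℕ) := by push_cast; ring

def walkEdges (v : Fin n → Bool) : List (Fin n) → List (Sym2 (Fin n → Bool))
  | [] => []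
  | c :: s => s(v, flipAt c v) :: walkEdges (flipAt c v) s

theorem length_walkEdges (v : Fin n → Bool) (s : List (Fin n)) :
    (walkEdges v s).length = s.length := by
  induction s generalizing v with
  | nil => rfl
  | cons c s ih => simp [walkEdges, ih]

theorem exists_eq_flipAt_of_adj {a b : Fin n → Bool} (h : (cube n).Adj a b) :
    ∃ c, b = flipAt c a := by
  obtain ⟨c, hc⟩ := Finset.card_eq_one.1 (show hammingDist a b = 1 from h)
  refine ⟨c, funext fun i => ?_⟩
  have hi := Finset.ext_iff.1 hc i
  simp only [Finset.mem_filter, Finset.mem_univ, true_and, Finset.mem_singleton] at hi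
  rcases eq_or_ne i c with rfl | hic
  · simpa [flipAt, Bool.eq_not_iff, eq_comm] using hi.2 rfl
  · simpa [flipAt, hic] using (not_not.1 (mt hi.1 hic)).symm

theorem exists_coords_of_walk {a b : Fin n → Bool} (w : (cube n).Walk a b) :
    ∃ s, endpoint a s = b ∧ walkEdges a s = w.edges ∧ ∀ t, endpoint a (s.take t) ∈ w.support := by
  induction w with
  | nil => exact ⟨[], endpoint_nil _, rfl, fun t => by simp⟩
  | @cons a b' b h w ih =>
    obtain ⟨c, rfl⟩ := exists_eq_flipAt_of_adj h
    obtain ⟨s, hend, hedges, hsupp⟩ := ih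
    refine ⟨c :: s, by rw [endpoint_cons, hend], by simp [walkEdges, hedges], fun t => ?_⟩
    cases t with
    | zero => simp
    | succ t => simpa [endpoint_cons] using Or.inr (hsupp t)

def ballPaths (v x : Fin n → Bool) (l L : ℕ) : Set (List (Fin n)) :=
  {s ∈ ballWalks v x l L | (walkEdges v s).Nodup}

theorem setOf_openConnOn_ball_subset (hd : hammingDist v x = l) :
    {ω | OpenConnOn (cube n) ω {z | hammingDist v z ≤ l} v x} ⊆
      ⋃ k : ℕ, ⋃ s ∈ ballPaths v x l (l + 2 * k),
        {ω | ∀ e ∈ walkEdges v s, ω e = true} := by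
  rintro ω ⟨w, hopen, hball⟩
  obtain ⟨s, hend, hedges, hsupp⟩ := exists_coords_of_walk w.bypass
  obtain ⟨k, hk⟩ := exists_length_eq_hammingDist_endpoint_add v s
  rw [hend, hd] at hk
  simp only [Set.mem_iUnion]
  refine ⟨k, s, ⟨⟨hk, fun t => hball _ (w.support_bypass_subset_support (hsupp t)), hend⟩, ?_⟩, ?_⟩
  · exact hedges ▸ w.bypass_isPath.isTrail.edges_nodup
  · exact fun e he => hopen e (w.edges_bypass_subset_edges (hedges ▸ he))

theorem perc_openConnOn_ball_le_tsum {p : ℝ} (hp : p ≤ 1) (hd : hammingDist v x = l) :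
    perc (Sym2 (Fin n → Bool)) p {ω | OpenConnOn (cube n) ω {z | hammingDist v z ≤ l} v x} ≤
      ∑' k : ℕ, ((l ^ l * (n * l * l) ^ k : ℕ) : ℝ≥0∞) * ENNReal.ofReal p ^ (l + 2 * k) := by
  set μ := perc (Sym2 (Fin n → Bool)) p
  have hcyl : ∀ k (s : ballPaths v x l (l + 2 * k)),
      μ {ω | ∀ e ∈ walkEdges v s, ω e = true} = ENNReal.ofReal p ^ (l + 2 * k) := by
    rintro k ⟨s, ⟨hlen, -⟩, hnd⟩
    simpa [List.toFinset_card_of_nodup hnd, length_walkEdges, hlen] using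
      perc_setOf_forall_mem_eq_true hp (walkEdges v s).toFinset
  calc μ _ ≤ ∑' k : ℕ, μ (⋃ s ∈ ballPaths v x l (l + 2 * k),
        {ω | ∀ e ∈ walkEdges v s, ω e = true}) :=
        (measure_mono (setOf_openConnOn_ball_subset hd)).trans (measure_iUnion_le _)
    _ ≤ ∑' k : ℕ, ∑' s : ballPaths v x l (l + 2 * k),
        μ {ω | ∀ e ∈ walkEdges v s, ω e = true} :=
        ENNReal.tsum_le_tsum fun k => measure_biUnion_le _ (Set.to_countable _) _
    _ ≤ ∑' k : ℕ, (ballWalks v x l (l + 2 * k)).encard * ENNReal.ofReal p ^ (l + 2 * k) := by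
        refine ENNReal.tsum_le_tsum fun k => ?_
        rw [tsum_congr (hcyl k), ENNReal.tsum_set_const]
        gcongr
        exact Set.sep_subset _ _
    _ ≤ _ := by
        gcongr with k
        exact_mod_cast encard_ballWalks_le hd k

theorem perc_openConnOn_ball_le {p : ℝ} (hp₀ : 0 ≤ p) (hp₁ : p ≤ 1) (hd : hammingDist v x = l)
    (hr : n * l ^ 2 * p ^ 2 < 1) :
    perc (Sym2 (Fin n → Bool)) p {ω | OpenConnOn (cube n) ω {z | hammingDist v z ≤ l} v x} ≤
      ENNReal.ofReal ((l * p) ^ l / (1 - n * l ^ 2 * p ^ 2)) := by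
  have hterm : ∀ k : ℕ, ((l ^ l * (n * l * l) ^ k : ℕ) : ℝ≥0∞) * ENNReal.ofReal p ^ (l + 2 * k) =
      ENNReal.ofReal ((l * p) ^ l) * ENNReal.ofReal (n * l ^ 2 * p ^ 2) ^ k := by
    intro k
    rw [← ENNReal.ofReal_natCast, ← ENNReal.ofReal_pow hp₀, ← ENNReal.ofReal_pow (by positivity),
      ← ENNReal.ofReal_mul (by positivity), ← ENNReal.ofReal_mul (by positivity)]
    congr 1
    push_cast
    ring
  calc _ ≤ _ := perc_openConnOn_ball_le_tsum hp₁ hd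
    _ = _ := by
      rw [tsum_congr hterm, ENNReal.tsum_ofReal_mul_pow (by positivity) (by positivity) hr]

end Cube

/-- **Probability of reaching the boundary of a ball in the percolated
hypercube.** With `p = n^{-α}`, `0 < β < α - 1/2` and `l = n^β`, the
probability that `v` is connected to a vertex `x` at Hamming distance `l` by an
open path contained in the ball of radius `l` around `v` is at most
`(lp)^l / (1 - n^{2β+1-2α})`. -/
theorem cube_ball_connection_prob_le (α β : ℝ) (hβ : 0 < β) (hαβ : β < α - 1 / 2)
    (n l : ℕ) (hn : 2 ≤ n) (hl : (l : ℝ) = (n : ℝ) ^ β)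
    (v x : Fin n → Bool) (hd : hammingDist v x = l) :
    perc (Sym2 (Fin n → Bool)) ((n : ℝ) ^ (-α))
        {ω | OpenConnOn (cube n) ω {z | hammingDist v z ≤ l} v x}
      ≤ ENNReal.ofReal
          (((l : ℝ) * (n : ℝ) ^ (-α)) ^ l / (1 - (n : ℝ) ^ (2 * β + 1 - 2 * α))) := by
  have hn₁ : (1 : ℝ) < n := by exact_mod_cast hn
  have hr : (n : ℝ) ^ (2 * β + 1 - 2 * α) = n * l ^ 2 * ((n : ℝ) ^ (-α)) ^ 2 := by
    rw [show 2 * β + 1 - 2 * α = 1 + β * 2 + -α * 2 by ring, Real.rpow_add (by positivity),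
      Real.rpow_add (by positivity), Real.rpow_one, Real.rpow_mul (by positivity),
      Real.rpow_mul (by positivity), Real.rpow_two, Real.rpow_two, hl]
  rw [hr]
  exact Cube.perc_openConnOn_ball_le (by positivity)
    (Real.rpow_le_one_of_one_le_of_nonpos hn₁.le (by linarith)) hd
    (hr ▸ Real.rpow_lt_one_of_one_lt_of_neg hn₁ (by linarith))
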